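/- Let (G,Σ) be a signed graph with G isomorphic to K₃ (a triangle on three vertices) and c ∈ [−1,1]^E nondegenerate. Suppose the triangle is an odd cycle and is tight with respect to c. Then P(G,Σ,c) has a unique feasible solution, this solution has rank exactly two, and there exists a nice dual solution ω supported on strictly tight edges (in fact with ω(e) ≠ 0 for every edge e). -/

import Mathlib

/-! ## Signed graphs (multigraphs with signed edges) -/

structure SignedGraph where
  V : Type
  E : Type
  fV : Fintype V
  dV : DecidableEq V
  fE : Fintype E
  dE : DecidableEq E
  ends : E → Sym2 V
  odd : E → Prop

attribute [instance] SignedGraph.fV SignedGraph.dV SignedGraph.fE SignedGraph.dE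

open Classical in
/-- The sign `σ(e)` of an edge: `-1` if odd, `+1` if even. -/
noncomputable def SignedGraph.sgn (G : SignedGraph) (e : G.E) : ℝ :=
  if G.odd e then -1 else 1

/-- `c` is nondegenerate: `c(e) ≠ σ(e)` for every edge. -/
def SignedGraph.NondegWeights (G : SignedGraph) (c : G.E → ℝ) : Prop :=
  ∀ e, (G.odd e → c e ≠ -1) ∧ (¬ G.odd e → c e ≠ 1)

/-- The vector `arccos(c)/π`. -/
noncomputable def SignedGraph.metric (G : SignedGraph) (c : G.E → ℝ) : G.E → ℝ :=
  fun e => Real.arccos (c e) / Real.pi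

/-! ## Cycles and paths -/

/-- A cycle of length `k+1` in a signed multigraph. -/
structure GCycle (G : SignedGraph) where
  k : ℕ
  vtx : Fin (k + 1) → G.V
  edge : Fin (k + 1) → G.E
  vtx_inj : Function.Injective vtx
  edge_inj : Function.Injective edge
  incid : ∀ i, G.ends (edge i) = s(vtx i, vtx (i + 1))

namespace GCycle

variable {G : SignedGraph}

def len (C : GCycle G) : ℕ := C.k + 1

def vertexSet (C : GCycle G) : Set G.V := Set.range C.vtx

def edgeSet (C : GCycle G) : Set G.E := Set.range C.edge

/-- The number of odd edges of the cycle, i.e. `|E(C) ∩ Σ|`. -/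
noncomputable def oddCount (C : GCycle G) : ℕ := Nat.card {i : Fin (C.k + 1) // G.odd (C.edge i)}

/-- An odd cycle: odd number of odd edges. -/
def IsOdd (C : GCycle G) : Prop := Odd C.oddCount

open Classical in
/-- `val(C,x) = Σ_{e ∈ E(C)∖Σ} x(e) + Σ_{e ∈ E(C)∩Σ} (1 - x(e))`. -/
noncomputable def val (C : GCycle G) (x : G.E → ℝ) : ℝ :=
  ∑ i, if G.odd (C.edge i) then 1 - x (C.edge i) else x (C.edge i)

end GCycle

/-- A path of length `len` in a signed multigraph. -/
structure GPath (G : SignedGraph) where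
  len : ℕ
  vtx : Fin (len + 1) → G.V
  edge : Fin len → G.E
  vtx_inj : Function.Injective vtx
  edge_inj : Function.Injective edge
  incid : ∀ i : Fin len, G.ends (edge i) = s(vtx i.castSucc, vtx i.succ)

namespace GPath

variable {G : SignedGraph}

def first (P : GPath G) : G.V := P.vtx 0

def last (P : GPath G) : G.V := P.vtx (Fin.last P.len)

def vertexSet (P : GPath G) : Set G.V := Set.range P.vtx

def edgeSet (P : GPath G) : Set G.E := Set.range P.edge

/-- The internal vertices of the path. -/
def inner (P : GPath G) : Set G.V :=
  {w | ∃ i : Fin (P.len + 1), P.vtx i = w ∧ i ≠ 0 ∧ i ≠ Fin.last P.len}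

noncomputable def oddCount (P : GPath G) : ℕ := Nat.card {i : Fin P.len // G.odd (P.edge i)}

/-- An odd path: odd number of odd edges. -/
def IsOdd (P : GPath G) : Prop := Odd P.oddCount

end GPath

/-- Two paths are internally disjoint: edge-disjoint, and every common vertex
is an endvertex of both. -/
def InternallyDisjoint {G : SignedGraph} (P Q : GPath G) : Prop :=
  Disjoint P.edgeSet Q.edgeSet ∧
  ∀ w, w ∈ P.vertexSet → w ∈ Q.vertexSet →
    (w = P.first ∨ w = P.last) ∧ (w = Q.first ∨ w = Q.last)

/-! ## The signed metric polytope, tightness -/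

/-- `x ∈ MET(G,Σ)`. -/
def InMET (G : SignedGraph) (x : G.E → ℝ) : Prop :=
  (∀ e, x e ∈ Set.Icc (0 : ℝ) 1) ∧
  ∀ C : GCycle G, C.IsOdd →
    1 - (C.oddCount : ℝ) ≤ ∑ i, G.sgn (C.edge i) * x (C.edge i)

/-- A tight odd cycle with respect to `c`: `val(C, arccos(c)/π) = 1`. -/
def IsTight (G : SignedGraph) (c : G.E → ℝ) (C : GCycle G) : Prop :=
  C.IsOdd ∧ C.val (G.metric c) = 1

/-- A tight edge: lies on some tight odd cycle. -/
def TightEdge (G : SignedGraph) (c : G.E → ℝ) (e : G.E) : Prop :=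
  ∃ C : GCycle G, IsTight G c C ∧ e ∈ C.edgeSet

/-- A strictly tight edge: lies on a tight odd cycle of length at least three. -/
def StrictlyTight (G : SignedGraph) (c : G.E → ℝ) (e : G.E) : Prop :=
  ∃ C : GCycle G, IsTight G c C ∧ 3 ≤ C.len ∧ e ∈ C.edgeSet

/-- A degenerate edge: `c(e) = σ(e)`. -/
def DegenerateEdge (G : SignedGraph) (c : G.E → ℝ) (e : G.E) : Prop :=
  (G.odd e ∧ c e = -1) ∨ (¬ G.odd e ∧ c e = 1)

/-! ## The signed PSD matrix completion problem and its dual -/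

/-- Feasibility of `P(G,Σ,c)` with the edge constraints restricted to `Es`. -/
def IsFeasibleE (G : SignedGraph) (Es : Set G.E) (c : G.E → ℝ)
    (X : Matrix G.V G.V ℝ) : Prop :=
  X.PosSemidef ∧ (∀ i, X i i = 1) ∧
  ∀ e ∈ Es, ∀ u v : G.V, G.ends e = s(u, v) →
    (G.odd e → X u v ≤ c e) ∧ (¬ G.odd e → c e ≤ X u v)

/-- Feasibility of the signed PSD completion problem `P(G,Σ,c)`. -/
def IsFeasible (G : SignedGraph) (c : G.E → ℝ) (X : Matrix G.V G.V ℝ) : Prop :=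
  IsFeasibleE G Set.univ c X

/-- The symmetric matrix `E_ij = (e_i e_jᵀ + e_j e_iᵀ)/2` attached to an unordered pair. -/
noncomputable def symPairMat {V : Type} [Fintype V] [DecidableEq V] (p : Sym2 V) :
    Matrix V V ℝ :=
  Sym2.lift ⟨fun u v => (1 / 2 : ℝ) • (Matrix.single u v 1 + Matrix.single v u 1),
    fun u v => by simp [add_comm]⟩ p

/-- The matrix `Ω = Σ_i ω(i) E_ii + Σ_e ω(e) E_e` of a dual vector `ω ∈ ℝ^{V ∪ E}`. -/
noncomputable def DualMat (G : SignedGraph) (ωV : G.V → ℝ) (ωE : G.E → ℝ) :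
    Matrix G.V G.V ℝ :=
  Matrix.diagonal ωV + ∑ e, ωE e • symPairMat (G.ends e)

/-- A dual solution of `P(G,Σ,c)`. -/
def IsDualSol (G : SignedGraph) (ωV : G.V → ℝ) (ωE : G.E → ℝ) : Prop :=
  (∀ e, ¬ G.odd e → ωE e ≤ 0) ∧ (∀ e, G.odd e → 0 ≤ ωE e) ∧
  (DualMat G ωV ωE).PosSemidef

/-- The strict complementarity condition (edge constraints restricted to `Es`). -/
def StrictCompE (G : SignedGraph) (Es : Set G.E) (c : G.E → ℝ) (X : Matrix G.V G.V ℝ)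
    (ωV : G.V → ℝ) (ωE : G.E → ℝ) : Prop :=
  (X * DualMat G ωV ωE).trace = 0 ∧
  (∀ e ∈ Es, ∀ u v : G.V, G.ends e = s(u, v) → (X u v - c e) * ωE e = 0) ∧
  X.rank + (DualMat G ωV ωE).rank = Fintype.card G.V

/-- The strict complementarity condition for `P(G,Σ,c)`. -/
def StrictComp (G : SignedGraph) (c : G.E → ℝ) (X : Matrix G.V G.V ℝ)
    (ωV : G.V → ℝ) (ωE : G.E → ℝ) : Prop :=
  StrictCompE G Set.univ c X ωV ωE

/-- A maximum-rank feasible solution (edge constraints restricted to `Es`). -/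
def IsMaxRankSolE (G : SignedGraph) (Es : Set G.E) (c : G.E → ℝ)
    (X : Matrix G.V G.V ℝ) : Prop :=
  IsFeasibleE G Es c X ∧ ∀ Y, IsFeasibleE G Es c Y → Y.rank ≤ X.rank

/-- A maximum-rank feasible solution of `P(G,Σ,c)`. -/
def IsMaxRankSol (G : SignedGraph) (c : G.E → ℝ) (X : Matrix G.V G.V ℝ) : Prop :=
  IsMaxRankSolE G Set.univ c X

/-- A nice dual solution: a dual solution satisfying the strict complementarity
condition with some (equivalently, any) maximum-rank feasible solution. -/
def IsNiceDual (G : SignedGraph) (c : G.E → ℝ) (ωV : G.V → ℝ) (ωE : G.E → ℝ) : Prop :=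
  IsDualSol G ωV ωE ∧ ∃ X, IsMaxRankSol G c X ∧ StrictComp G c X ωV ωE

/-! ## Resigning, minors -/

/-- The edge `e` lies on the cut `δ(S)`. -/
def Crosses (G : SignedGraph) (S : Set G.V) (e : G.E) : Prop :=
  ∃ u v, G.ends e = s(u, v) ∧ ((u ∈ S) ↔ (v ∉ S))

/-- `H` is (up to relabeling) obtained from `G` by resigning on a vertex set. -/
def IsResign (G H : SignedGraph) : Prop :=
  ∃ (S : Set G.V) (fV : G.V ≃ H.V) (fE : G.E ≃ H.E),
    (∀ e, H.ends (fE e) = (G.ends e).map fV) ∧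
    (∀ e, H.odd (fE e) ↔ Xor' (G.odd e) (Crosses G S e))

/-- `H` is (up to relabeling) obtained from `G` by deleting edges. -/
def IsEdgeDeletion (G H : SignedGraph) : Prop :=
  ∃ (fV : G.V ≃ H.V) (fE : H.E ↪ G.E),
    (∀ e, H.ends e = (G.ends (fE e)).map fV) ∧
    (∀ e, H.odd e ↔ G.odd (fE e))

/-- `H` is (up to relabeling) obtained from `G` by contracting an even edge. -/
def IsContraction (G H : SignedGraph) : Prop :=
  ∃ (e₀ : G.E) (u v : G.V), u ≠ v ∧ G.ends e₀ = s(u, v) ∧ ¬ G.odd e₀ ∧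
    ∃ (f : G.V → H.V) (fE : {e : G.E // e ≠ e₀} ≃ H.E),
      Function.Surjective f ∧
      (∀ a b, f a = f b ↔ (a = b ∨ (a = u ∧ b = v) ∨ (a = v ∧ b = u))) ∧
      (∀ e : {e : G.E // e ≠ e₀}, H.ends (fE e) = (G.ends e.1).map f) ∧
      (∀ e : {e : G.E // e ≠ e₀}, H.odd (fE e) ↔ G.odd e.1)

def MinorStep (G H : SignedGraph) : Prop :=
  IsEdgeDeletion G H ∨ IsResign G H ∨ IsContraction G H

/-- `H` is a minor of `G`. -/
def HasAsMinor (G H : SignedGraph) : Prop := Relation.ReflTransGen MinorStep G H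

/-- Sign equivalence: related by a series of resignings. -/
def SignEquiv (G H : SignedGraph) : Prop := Relation.ReflTransGen IsResign G H

/-- `H` is the odd-`K₄`: `K₄` with all six edges odd. -/
def IsOddK4 (H : SignedGraph) : Prop :=
  Fintype.card H.V = 4 ∧ Fintype.card H.E = 6 ∧ (∀ e, H.odd e) ∧
  (∀ e, ¬ (H.ends e).IsDiag) ∧ ∀ u v : H.V, u ≠ v → ∃ e, H.ends e = s(u, v)

/-- `H` is the odd-`K₃²`: the triangle with every edge doubled into an odd/even
parallel pair. -/
def IsOddK3sq (H : SignedGraph) : Prop :=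
  Fintype.card H.V = 3 ∧ Fintype.card H.E = 6 ∧ (∀ e, ¬ (H.ends e).IsDiag) ∧
  ∀ u v : H.V, u ≠ v →
    (∃ e, H.ends e = s(u, v) ∧ H.odd e) ∧ (∃ e, H.ends e = s(u, v) ∧ ¬ H.odd e)

def OddK4Free (G : SignedGraph) : Prop := ¬ ∃ H, HasAsMinor G H ∧ IsOddK4 H

def OddK3sqFree (G : SignedGraph) : Prop := ¬ ∃ H, HasAsMinor G H ∧ IsOddK3sq H

/-- 2-connectivity: removing any vertex leaves the rest connected. -/
def TwoConnected (G : SignedGraph) : Prop :=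
  ∀ w u v : G.V, u ≠ w → v ≠ w →
    ∃ P : GPath G, P.first = u ∧ P.last = v ∧ ∀ i, P.vtx i ≠ w

/-! ## The hypergraph `ℋ(𝒞)` -/

def blockUnion {G : SignedGraph} (B : Set (GCycle G)) : Set G.V :=
  ⋃ C ∈ B, C.vertexSet

/-- A partition of the cycle family `𝒞` such that the vertex-set unions of
distinct blocks share at most one vertex. -/
def IsValidPartition (G : SignedGraph) (𝒞 : Set (GCycle G))
    (P : Set (Set (GCycle G))) : Prop :=
  (∀ B ∈ P, B.Nonempty) ∧ (∀ B ∈ P, B ⊆ 𝒞) ∧ (∀ C ∈ 𝒞, ∃ B ∈ P, C ∈ B) ∧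
  (∀ B ∈ P, ∀ B' ∈ P, B ≠ B' → Disjoint B B') ∧
  (∀ B ∈ P, ∀ B' ∈ P, B ≠ B' → (blockUnion B ∩ blockUnion B').Subsingleton)

/-- `ℰ` is the hyperedge family of `ℋ(𝒞)`: the block unions of the finest valid
partition of `𝒞`. -/
def IsHypergraphOf (G : SignedGraph) (𝒞 : Set (GCycle G)) (ℰ : Set (Set G.V)) : Prop :=
  ∃ P, IsValidPartition G 𝒞 P ∧
    (∀ Q, IsValidPartition G 𝒞 Q → ∀ B ∈ P, ∃ B' ∈ Q, B ⊆ B') ∧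
    ℰ = blockUnion '' P

/-- A hypergraph (given by its hyperedge family) is acyclic: its vertex-hyperedge
incidence bipartite graph has no cycle. -/
def HypAcyclic {V : Type} (ℰ : Set (Set V)) : Prop :=
  ¬ ∃ (k : ℕ) (v : Fin (k + 2) → V) (Ed : Fin (k + 2) → Set V),
      Function.Injective v ∧ Function.Injective Ed ∧ (∀ i, Ed i ∈ ℰ) ∧
      ∀ i, v i ∈ Ed i ∧ v (i + 1) ∈ Ed i

/-- A hypergraph forms a triangle: no isolated vertex, and exactly three
hyperedges pairwise intersecting in exactly one vertex. -/
def HypTriangle {V : Type} (ℰ : Set (Set V)) : Prop :=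
  (∀ x : V, ∃ s ∈ ℰ, x ∈ s) ∧
  ∃ s₁ s₂ s₃ : Set V, s₁ ≠ s₂ ∧ s₁ ≠ s₃ ∧ s₂ ≠ s₃ ∧ ℰ = {s₁, s₂, s₃} ∧
    (∃ x, s₁ ∩ s₂ = {x}) ∧ (∃ x, s₁ ∩ s₃ = {x}) ∧ (∃ x, s₂ ∩ s₃ = {x})

/-! ## Reduction of a weighted instance to a nondegenerate one -/

open Classical in
/-- The edge weight obtained from `c` after resigning on `S`. -/
noncomputable def resignVal (G : SignedGraph) (S : Set G.V) (c : G.E → ℝ) (e : G.E) : ℝ :=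
  if Crosses G S e then -c e else c e

/-- Resigning a weighted signed graph. -/
def CResignRel (G : SignedGraph) (c : G.E → ℝ) (H : SignedGraph) (c' : H.E → ℝ) : Prop :=
  ∃ (S : Set G.V) (fV : G.V ≃ H.V) (fE : G.E ≃ H.E),
    (∀ e, H.ends (fE e) = (G.ends e).map fV) ∧
    (∀ e, H.odd (fE e) ↔ Xor' (G.odd e) (Crosses G S e)) ∧
    (∀ e, c' (fE e) = resignVal G S c e)

/-- Contracting an even edge `e₀` with `c(e₀) = 1` in a weighted signed graph. -/
def CContractRel (G : SignedGraph) (c : G.E → ℝ) (H : SignedGraph) (c' : H.E → ℝ) : Prop :=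
  ∃ (e₀ : G.E) (u v : G.V), u ≠ v ∧ G.ends e₀ = s(u, v) ∧ ¬ G.odd e₀ ∧ c e₀ = 1 ∧
    ∃ (f : G.V → H.V) (fE : {e : G.E // e ≠ e₀} ≃ H.E),
      Function.Surjective f ∧
      (∀ a b, f a = f b ↔ (a = b ∨ (a = u ∧ b = v) ∨ (a = v ∧ b = u))) ∧
      (∀ e : {e : G.E // e ≠ e₀}, H.ends (fE e) = (G.ends e.1).map f) ∧
      (∀ e : {e : G.E // e ≠ e₀}, H.odd (fE e) ↔ G.odd e.1) ∧
      (∀ e : {e : G.E // e ≠ e₀}, c' (fE e) = c e.1)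

/-- A weighted signed graph instance. -/
def WInst : Type 1 := Σ G : SignedGraph, (G.E → ℝ)

/-- The reduction relation on weighted instances: a sequence of resignings and
contractions of even edges of weight `1`. -/
def ReducesTo (A B : WInst) : Prop :=
  Relation.ReflTransGen
    (fun X Y => CResignRel X.1 X.2 Y.1 Y.2 ∨ CContractRel X.1 X.2 Y.1 Y.2) A B

/-! ## Subproblems on subgraphs (for the gluing lemma) -/

/-- Feasibility of the completion problem of the subgraph with vertices `Vs` and
edges `Es`. -/
def IsFeasibleOn (G : SignedGraph) (Vs : Finset G.V) (Es : Finset G.E) (c : G.E → ℝ)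
    (X : Matrix ↥Vs ↥Vs ℝ) : Prop :=
  X.PosSemidef ∧ (∀ i, X i i = 1) ∧
  ∀ e ∈ Es, ∀ u v : ↥Vs, G.ends e = s(u.1, v.1) →
    (G.odd e → X u v ≤ c e) ∧ (¬ G.odd e → c e ≤ X u v)

/-- A dual solution of the subgraph problem, recorded as an ambient dual vector
supported on `Vs ∪ Es` (i.e. the dual matrix is padded with zero rows/columns). -/
def IsDualSolOn (G : SignedGraph) (Vs : Finset G.V) (Es : Finset G.E)
    (ωV : G.V → ℝ) (ωE : G.E → ℝ) : Prop :=
  (∀ v, v ∉ Vs → ωV v = 0) ∧ (∀ e, e ∉ Es → ωE e = 0) ∧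
  (∀ e ∈ Es, ¬ G.odd e → ωE e ≤ 0) ∧ (∀ e ∈ Es, G.odd e → 0 ≤ ωE e) ∧
  (DualMat G ωV ωE).PosSemidef

/-- The strict complementarity condition for the subgraph problem. -/
def StrictCompOn (G : SignedGraph) (Vs : Finset G.V) (Es : Finset G.E) (c : G.E → ℝ)
    (X : Matrix ↥Vs ↥Vs ℝ) (ωV : G.V → ℝ) (ωE : G.E → ℝ) : Prop :=
  (X * (DualMat G ωV ωE).submatrix (Subtype.val : ↥Vs → G.V) Subtype.val).trace = 0 ∧
  (∀ e ∈ Es, ∀ u v : ↥Vs, G.ends e = s(u.1, v.1) → (X u v - c e) * ωE e = 0) ∧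
  X.rank + (DualMat G ωV ωE).rank = Vs.card

/-! ## Fans, ladders, rooted odd-K₄⁻ minors -/

/-- The edge set `F` forms a subdivision of a fan: a hub `z`, rim vertices `w`,
subdivided spokes `Sp i` from `z` to `w i` and subdivided rim edges `R i` from
`w i` to `w (i+1)`, all internally disjoint. -/
def IsFanSubdivision (G : SignedGraph) (F : Set G.E) : Prop :=
  ∃ (m : ℕ) (z : G.V) (w : Fin (m + 1) → G.V)
    (Sp : Fin (m + 1) → GPath G) (R : Fin m → GPath G),
    Function.Injective w ∧ (∀ i, w i ≠ z) ∧
    (∀ i, (Sp i).first = z ∧ (Sp i).last = w i ∧ 1 ≤ (Sp i).len) ∧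
    (∀ i : Fin m, (R i).first = w i.castSucc ∧ (R i).last = w i.succ ∧ 1 ≤ (R i).len) ∧
    (∀ i j, i ≠ j → InternallyDisjoint (Sp i) (Sp j)) ∧
    (∀ i j, i ≠ j → InternallyDisjoint (R i) (R j)) ∧
    (∀ i j, InternallyDisjoint (Sp i) (R j)) ∧
    F = (⋃ i, (Sp i).edgeSet) ∪ (⋃ i, (R i).edgeSet)

/-- A tight odd ladder with respect to `c`. -/
structure TightOddLadder (G : SignedGraph) (c : G.E → ℝ) where
  k : ℕ
  cyc : Fin (k + 1) → GCycle G
  tight : ∀ i, IsTight G c (cyc i)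
  distinct : ∀ i j, i ≠ j → (cyc i).edgeSet ≠ (cyc j).edgeSet
  consec : ∀ i : Fin k, ∃ P : GPath G, 1 ≤ P.len ∧
      P.edgeSet = (cyc i.castSucc).edgeSet ∩ (cyc i.succ).edgeSet ∧
      P.vertexSet = (cyc i.castSucc).vertexSet ∩ (cyc i.succ).vertexSet
  fan : ∀ i j : Fin (k + 1), i ≤ j →
      ((cyc i).vertexSet ∩ (cyc j).vertexSet).Nonempty →
      IsFanSubdivision G (⋃ ℓ ∈ Finset.Icc i j, (cyc ℓ).edgeSet)

namespace TightOddLadder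

variable {G : SignedGraph} {c : G.E → ℝ}

def edgeSet (L : TightOddLadder G c) : Set G.E := ⋃ i, (L.cyc i).edgeSet

def vertexSet (L : TightOddLadder G c) : Set G.V := ⋃ i, (L.cyc i).vertexSet

/-- The ladder is rooted at the pair of vertices `{u, v}`. -/
def RootedVV (L : TightOddLadder G c) (u v : G.V) : Prop :=
  u ∈ (L.cyc 0).vertexSet ∧ (∀ i, i ≠ 0 → u ∉ (L.cyc i).vertexSet) ∧
  v ∈ (L.cyc (Fin.last L.k)).vertexSet ∧
  ∀ i, i ≠ Fin.last L.k → v ∉ (L.cyc i).vertexSet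

/-- The ladder is rooted at the pair `{e, v}` of an edge and a vertex. -/
def RootedEV (L : TightOddLadder G c) (e : G.E) (v : G.V) : Prop :=
  e ∈ (L.cyc 0).edgeSet ∧ (∀ i, i ≠ 0 → e ∉ (L.cyc i).edgeSet) ∧
  v ∈ (L.cyc (Fin.last L.k)).vertexSet ∧
  ∀ i, i ≠ Fin.last L.k → v ∉ (L.cyc i).vertexSet

end TightOddLadder

/-- There is an odd cycle through `u` and `v` inside the subgraph induced by `s`. -/
def HasOddCycleThroughIn (G : SignedGraph) (s : Set G.V) (u v : G.V) : Prop :=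
  ∃ C : GCycle G, C.IsOdd ∧ C.vertexSet ⊆ s ∧ u ∈ C.vertexSet ∧ v ∈ C.vertexSet

/-- The subgraph induced by `s` has an odd-K₄⁻ minor rooted at `{u,v}`: five
internally disjoint paths joining two branch vertices `a, b` and the roots `u, v`
such that the cycle through `a,b,u` and the cycle through `a,b,v` are both odd. -/
def HasRootedOddK4MinusIn (G : SignedGraph) (s : Set G.V) (u v : G.V) : Prop :=
  ∃ (a b : G.V) (P₁ P₂ P₃ P₄ P₅ : GPath G),
    a ≠ b ∧ a ≠ u ∧ a ≠ v ∧ b ≠ u ∧ b ≠ v ∧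
    P₁.first = a ∧ P₁.last = u ∧ P₂.first = u ∧ P₂.last = b ∧
    P₃.first = a ∧ P₃.last = v ∧ P₄.first = v ∧ P₄.last = b ∧
    P₅.first = a ∧ P₅.last = b ∧
    (1 ≤ P₁.len ∧ 1 ≤ P₂.len ∧ 1 ≤ P₃.len ∧ 1 ≤ P₄.len ∧ 1 ≤ P₅.len) ∧
    (InternallyDisjoint P₁ P₂ ∧ InternallyDisjoint P₁ P₃ ∧ InternallyDisjoint P₁ P₄ ∧
     InternallyDisjoint P₁ P₅ ∧ InternallyDisjoint P₂ P₃ ∧ InternallyDisjoint P₂ P₄ ∧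
     InternallyDisjoint P₂ P₅ ∧ InternallyDisjoint P₃ P₄ ∧ InternallyDisjoint P₃ P₅ ∧
     InternallyDisjoint P₄ P₅) ∧
    (P₁.vertexSet ⊆ s ∧ P₂.vertexSet ⊆ s ∧ P₃.vertexSet ⊆ s ∧ P₄.vertexSet ⊆ s ∧
     P₅.vertexSet ⊆ s) ∧
    Odd (P₁.oddCount + P₂.oddCount + P₅.oddCount) ∧
    Odd (P₃.oddCount + P₄.oddCount + P₅.oddCount)

/-- A decomposition of a cycle `C` through `u` and `v` into two `u`-`v` paths. -/
def CycleDecomp {G : SignedGraph} (C : GCycle G) (u v : G.V) (P Q : GPath G) : Prop :=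
  P.first = u ∧ P.last = v ∧ Q.first = u ∧ Q.last = v ∧ 1 ≤ P.len ∧ 1 ≤ Q.len ∧
  Disjoint P.edgeSet Q.edgeSet ∧ P.edgeSet ∪ Q.edgeSet = C.edgeSet ∧
  P.vertexSet ∪ Q.vertexSet = C.vertexSet

/-! ## Path reduction -/

/-- `(H, c')` is the path-reduction of `(G, c)` through the path `P`: after a
resigning making all edges of `P` even, the internal vertices of `P` are removed
(together with all edges incident to them) and a new even edge joining the two
endvertices of `P` is inserted, with
`arccos c'(uv) = Σ_{e ∈ E(P)} arccos(c(e))` (for the resigned weights). -/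
def IsPathReduction (G : SignedGraph) (c : G.E → ℝ) (P : GPath G)
    (H : SignedGraph) (c' : H.E → ℝ) : Prop :=
  ∃ S : Set G.V,
    (∀ i : Fin P.len, ¬ Xor' (G.odd (P.edge i)) (Crosses G S (P.edge i))) ∧
    ∃ (fV : {w : G.V // w ∉ P.inner} ≃ H.V)
      (fE : ({e : G.E // ∀ w ∈ G.ends e, w ∉ P.inner} ⊕ Unit) ≃ H.E),
      (∀ (e : {e : G.E // ∀ w ∈ G.ends e, w ∉ P.inner}) (a b : G.V)
          (ha : a ∉ P.inner) (hb : b ∉ P.inner), G.ends e.1 = s(a, b) →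
          H.ends (fE (Sum.inl e)) = s(fV ⟨a, ha⟩, fV ⟨b, hb⟩)) ∧
      (∀ e, H.odd (fE (Sum.inl e)) ↔ Xor' (G.odd e.1) (Crosses G S e.1)) ∧
      (∀ e, c' (fE (Sum.inl e)) = resignVal G S c e.1) ∧
      (∀ (hu : P.first ∉ P.inner) (hv : P.last ∉ P.inner),
          H.ends (fE (Sum.inr ())) = s(fV ⟨P.first, hu⟩, fV ⟨P.last, hv⟩)) ∧
      ¬ H.odd (fE (Sum.inr ())) ∧
      Real.arccos (c' (fE (Sum.inr ()))) = ∑ i, Real.arccos (resignVal G S c (P.edge i))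

/-! ## Spherical tensegrities -/

/-- The Gram matrix of a spherical configuration. -/
noncomputable def gramMat (G : SignedGraph) {n : ℕ}
    (p : G.V → EuclideanSpace ℝ (Fin n)) : Matrix G.V G.V ℝ :=
  Matrix.of fun u v => (inner ℝ (p u) (p v) : ℝ)

/-- Universal rigidity of the spherical tensegrity `(G, Σ, p)`: the Gram matrix of
`p` is the unique solution of `P(G, Σ, c)` where `c(ij) = p(i)·p(j)`. -/
def UniversallyRigid (G : SignedGraph) {n : ℕ}
    (p : G.V → EuclideanSpace ℝ (Fin n)) (c : G.E → ℝ) : Prop :=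
  IsFeasible G c (gramMat G p) ∧ ∀ X, IsFeasible G c X → X = gramMat G p

/-- Super stability of a spherical tensegrity in `𝕊^{n-1}`. -/
def SuperStable (G : SignedGraph) {n : ℕ}
    (p : G.V → EuclideanSpace ℝ (Fin n)) (c : G.E → ℝ) : Prop :=
  ∃ (ωV : G.V → ℝ) (ωE : G.E → ℝ),
    IsDualSol G ωV ωE ∧
    (gramMat G p * DualMat G ωV ωE).trace = 0 ∧
    (∀ e, ∀ u v : G.V, G.ends e = s(u, v) → ((inner ℝ (p u) (p v) : ℝ) - c e) * ωE e = 0) ∧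
    (DualMat G ωV ωE).rank + n = Fintype.card G.V ∧
    ∀ S : Matrix (Fin n) (Fin n) ℝ, S.IsSymm →
      (∀ w : G.V, ∑ i, ∑ j, p w i * S i j * p w j = 0) →
      (∀ e, ∀ u v : G.V, G.ends e = s(u, v) → ωE e ≠ 0 →
        ∑ i, ∑ j, p u i * S i j * p v j = 0) →
      S = 0

open Real Matrix

/-!
Put `r i = σ(e i) c(e i)`; tightness of the triangle says `∑ arccos (r i) = π`. If `X` is
feasible with edge entries `t i`, then `s i = σ(e i) t i ≥ r i`, and because the triangle is odd,
`det X = 1 - 2 s₀ s₁ s₂ - ∑ s i ^ 2 ≥ 0`. Such a determinant inequality forces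
`∑ arccos (s i) ≥ π`, and since `arccos` is decreasing this gives `s = r`: the solution is
unique. It is the Gram matrix of three points of the unit circle whose consecutive angular
differences are `σ(e i) arccos c(e i)` (these add up to a multiple of `2π` because the triangle
is odd), so it has rank two. Its kernel is spanned by the vector `q` of sines of the opposite
differences, and `Ω = q qᵀ` is a nice dual solution: its entry on the edge `e i` has the sign of
`-σ(e i)` and is never zero.
-/

namespace Real

theorem pi_le_arccos_add_arccos_add_arccos {x y z : ℝ} (hx : x ∈ Set.Icc (-1) 1)
    (hy : y ∈ Set.Icc (-1) 1) (hz : z ∈ Set.Icc (-1) 1)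
    (hdet : 0 ≤ 1 - 2 * (x * y * z) - x ^ 2 - y ^ 2 - z ^ 2) :
    π ≤ arccos x + arccos y + arccos z := by
  by_contra! hlt
  -- otherwise `x > cos (π - arccos y - arccos z) = √(1 - y²) √(1 - z²) - y z`
  have hcos : cos (π - (arccos y + arccos z)) < cos (arccos x) :=
    cos_lt_cos_of_nonneg_of_le_pi (arccos_nonneg x)
      (by linarith [arccos_nonneg y, arccos_nonneg z]) (by linarith)
  rw [cos_pi_sub, cos_arccos hx.1 hx.2, cos_add, cos_arccos hy.1 hy.2, cos_arccos hz.1 hz.2,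
    sin_arccos, sin_arccos, ← sqrt_mul (by nlinarith [hy.1, hy.2])] at hcos
  have hprod : 0 ≤ (1 - y ^ 2) * (1 - z ^ 2) :=
    mul_nonneg (by nlinarith [hy.1, hy.2]) (by nlinarith [hz.1, hz.2])
  nlinarith [sq_sqrt hprod, sqrt_nonneg ((1 - y ^ 2) * (1 - z ^ 2))]

theorem eq_of_le_of_sum_arccos_eq_pi {r s : Fin 3 → ℝ} (hr : ∀ i, -1 ≤ r i)
    (hrs : ∀ i, r i ≤ s i) (hs : ∀ i, s i ≤ 1) (hsum : ∑ i, arccos (r i) = π)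
    (hdet : 0 ≤ 1 - 2 * (s 0 * s 1 * s 2) - s 0 ^ 2 - s 1 ^ 2 - s 2 ^ 2) : s = r := by
  have hsI : ∀ i, s i ∈ Set.Icc (-1) 1 := fun i => ⟨(hr i).trans (hrs i), hs i⟩
  have hle : ∀ i ∈ Finset.univ, 0 ≤ arccos (r i) - arccos (s i) :=
    fun i _ => sub_nonneg.2 (arccos_le_arccos (hrs i))
  have hsum0 : ∑ i, (arccos (r i) - arccos (s i)) = 0 := by
    refine le_antisymm ?_ (Finset.sum_nonneg hle)
    rw [Finset.sum_sub_distrib, hsum, Fin.sum_univ_three]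
    linarith [pi_le_arccos_add_arccos_add_arccos (hsI 0) (hsI 1) (hsI 2) hdet]
  funext i
  refine arccos_injOn (hsI i) ⟨hr i, (hrs i).trans (hs i)⟩ ?_
  exact (sub_eq_zero.1 ((Finset.sum_eq_zero_iff_of_nonneg hle).1 hsum0 i
    (Finset.mem_univ i))).symm

theorem neg_one_lt_of_sum_arccos_eq_pi {r : Fin 3 → ℝ} (hr : ∀ i, r i < 1)
    (hsum : ∑ i, arccos (r i) = π) (i : Fin 3) : -1 < r i := by
  refine arccos_lt_pi.1 (hsum ▸ Finset.single_lt_sum (j := i + 1) (by revert i; decide)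
    (Finset.mem_univ i) (Finset.mem_univ _) (arccos_pos.2 (hr _))
    fun k _ _ => (arccos_pos.2 (hr k)).le)

theorem sum_sin_sub_mul_cos_fin_three (α : Fin 3 → ℝ) :
    ∑ i, sin (α (i + 1) - α (i + 2)) * cos (α i) = 0 := by
  simp only [Fin.sum_univ_three, Fin.isValue, zero_add, Fin.reduceAdd, sin_sub]
  ring

theorem sum_sin_sub_mul_sin_fin_three (α : Fin 3 → ℝ) :
    ∑ i, sin (α (i + 1) - α (i + 2)) * sin (α i) = 0 := by
  simp only [Fin.sum_univ_three, Fin.isValue, zero_add, Fin.reduceAdd, sin_sub]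
  ring

theorem exists_fin_three_sub_eq_of_sum_eq_int_mul_two_pi {d : Fin 3 → ℝ} {k : ℤ}
    (hd : ∑ i, d i = k * (2 * π)) :
    ∃ α : Fin 3 → ℝ, ∀ i, cos (α i - α (i + 1)) = cos (d i) ∧
      sin (α i - α (i + 1)) = sin (d i) := by
  rw [Fin.sum_univ_three] at hd
  refine ⟨![0, -d 0, d 2], fun i => ?_⟩
  fin_cases i
  · simp
  · have h : -d 0 - d 2 = d 1 - k * (2 * π) := by linarith
    simp [h, cos_sub_int_mul_two_pi, sin_sub_int_mul_two_pi]
  · simp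

end Real

namespace Matrix

variable {m n k : Type*}

theorem card_le_rank_of_det_submatrix_ne_zero {K : Type*} [Field K] [Fintype n] [Fintype k]
    [DecidableEq k] (A : Matrix m n K) (r : k → m) (c : k → n)
    (h : (A.submatrix r c).det ≠ 0) : Fintype.card k ≤ A.rank := by
  rw [← rank_of_isUnit _ ((isUnit_iff_isUnit_det _).2 h.isUnit)]
  exact rank_submatrix_le A r c

theorem rank_vecMulVec_self {K : Type*} [Field K] [Fintype n] {q : n → K} (hq : q ≠ 0) :
    (vecMulVec q q).rank = 1 := by
  obtain ⟨i, hi⟩ := Function.ne_iff.1 hq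
  refine le_antisymm (rank_vecMulVec_le q q) ?_
  simpa using card_le_rank_of_det_submatrix_ne_zero (vecMulVec q q) (fun _ : Unit => i)
    (fun _ => i) (by simpa [vecMulVec_apply] using hi)

theorem PosSemidef.abs_apply_le_one [Fintype n] {A : Matrix n n ℝ} (hA : A.PosSemidef)
    (hdiag : ∀ i, A i i = 1) (i j : n) : |A i j| ≤ 1 := by
  have hdet := (hA.submatrix ![i, j]).det_nonneg
  have hsymm : A j i = A i j := by simpa using hA.isHermitian.apply i j
  simp only [det_fin_two, submatrix_apply, cons_val_zero, cons_val_one, hdiag, hsymm] at hdet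
  exact abs_le.2 ⟨by nlinarith, by nlinarith⟩

theorem ext_of_isSymm_of_cyclic (v : Fin 3 ≃ n) {X Y : Matrix n n ℝ} (hX : X.IsSymm)
    (hY : Y.IsSymm) (hdiag : ∀ a, X a a = Y a a)
    (hedge : ∀ i, X (v i) (v (i + 1)) = Y (v i) (v (i + 1))) : X = Y := by
  suffices X.submatrix v v = Y.submatrix v v by
    simpa using congrArg (fun M => M.submatrix v.symm v.symm) this
  ext i j
  fin_cases i <;> fin_cases j
  all_goals first
    | exact hdiag _
    | exact hedge _
    | exact (hX.apply _ _).trans ((hedge _).trans (hY.apply _ _).symm)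

theorem det_eq_of_isSymm_of_diag [Fintype n] [DecidableEq n] (v : Fin 3 ≃ n)
    {X : Matrix n n ℝ} (hX : X.IsSymm) (hdiag : ∀ a, X a a = 1) :
    X.det = 1 + 2 * (X (v 0) (v 1) * X (v 1) (v 2) * X (v 2) (v 0))
      - X (v 0) (v 1) ^ 2 - X (v 1) (v 2) ^ 2 - X (v 2) (v 0) ^ 2 := by
  rw [← det_submatrix_equiv_self v, det_fin_three]
  simp only [submatrix_apply, hdiag, hX.apply (v 1) (v 0), hX.apply (v 2) (v 1),
    hX.apply (v 0) (v 2)]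
  ring

noncomputable def circlePoints (θ : n → ℝ) : Matrix n (Fin 2) ℝ :=
  of fun i => ![cos (θ i), sin (θ i)]

noncomputable def circleGram (θ : n → ℝ) : Matrix n n ℝ := of fun i j => cos (θ i - θ j)

theorem circleGram_eq_mul_transpose (θ : n → ℝ) :
    circleGram θ = circlePoints θ * (circlePoints θ)ᵀ := by
  ext i j
  simp [circleGram, circlePoints, mul_apply, Fin.sum_univ_two, cos_sub]

theorem isSymm_circleGram (θ : n → ℝ) : (circleGram θ).IsSymm :=
  IsSymm.ext fun i j => by simp only [circleGram, of_apply]; rw [← cos_neg, neg_sub]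

theorem posSemidef_circleGram [Fintype n] (θ : n → ℝ) : (circleGram θ).PosSemidef := by
  rw [circleGram_eq_mul_transpose, ← conjTranspose_eq_transpose_of_trivial]
  exact posSemidef_self_mul_conjTranspose _

theorem rank_circleGram_le [Fintype n] (θ : n → ℝ) : (circleGram θ).rank ≤ 2 := by
  rw [circleGram_eq_mul_transpose]
  exact (rank_mul_le_left _ _).trans ((rank_le_card_width _).trans_eq (Fintype.card_fin 2))

theorem rank_circleGram_eq_two [Fintype n] {θ : n → ℝ} {i j : n}
    (h : |cos (θ i - θ j)| < 1) : (circleGram θ).rank = 2 := by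
  refine le_antisymm (rank_circleGram_le θ) ?_
  have hdet : ((circleGram θ).submatrix ![i, j] ![i, j]).det ≠ 0 := by
    simp only [det_fin_two, submatrix_apply, cons_val_zero, cons_val_one, circleGram, of_apply,
      sub_self, cos_zero, ← neg_sub (θ i) (θ j), cos_neg]
    nlinarith [abs_lt.1 h]
  simpa using card_le_rank_of_det_submatrix_ne_zero _ _ _ hdet

theorem circleGram_mulVec_eq_zero [Fintype n] {θ q : n → ℝ}
    (hcos : ∑ j, q j * cos (θ j) = 0) (hsin : ∑ j, q j * sin (θ j) = 0) :
    circleGram θ *ᵥ q = 0 := by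
  ext i
  simp only [mulVec, dotProduct, circleGram, of_apply, cos_sub, Pi.zero_apply]
  calc ∑ j, (cos (θ i) * cos (θ j) + sin (θ i) * sin (θ j)) * q j
      = cos (θ i) * ∑ j, q j * cos (θ j) + sin (θ i) * ∑ j, q j * sin (θ j) := by
        simp only [Finset.mul_sum, ← Finset.sum_add_distrib]
        exact Finset.sum_congr rfl fun j _ => by ring
    _ = 0 := by rw [hcos, hsin]; ring

theorem circleGram_mulVec_sin_sub [Fintype n] (v : Fin 3 ≃ n) (α : Fin 3 → ℝ) :
    circleGram (α ∘ v.symm) *ᵥ (fun u => sin (α (v.symm u + 1) - α (v.symm u + 2))) = 0 := by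
  refine circleGram_mulVec_eq_zero ?_ ?_ <;> rw [← v.sum_comp]
  · simpa using Real.sum_sin_sub_mul_cos_fin_three α
  · simpa using Real.sum_sin_sub_mul_sin_fin_three α

end Matrix

section symPairMat

variable {V : Type} [Fintype V] [DecidableEq V]

theorem symPairMat_apply_self {p : Sym2 V} (hp : ¬ p.IsDiag) (u : V) : symPairMat p u u = 0 := by
  induction p using Sym2.ind with
  | h x y =>
    have hxy : ¬ (x = u ∧ y = u) := fun h => hp (by simp [h.1, h.2])
    have hyx : ¬ (y = u ∧ x = u) := fun h => hxy h.symm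
    simp [symPairMat, hxy, hyx]

theorem symPairMat_apply_of_ne (p : Sym2 V) {u v : V} (huv : u ≠ v) :
    symPairMat p u v = if p = s(u, v) then 1 / 2 else 0 := by
  induction p using Sym2.ind with
  | h x y =>
    by_cases h₁ : x = u ∧ y = v
    · obtain ⟨rfl, rfl⟩ := h₁
      simp [symPairMat, huv]
    by_cases h₂ : x = v ∧ y = u
    · obtain ⟨rfl, rfl⟩ := h₂
      simp [symPairMat, huv, huv.symm]
    · have h₂' : ¬ (y = u ∧ x = v) := fun h => h₂ h.symm
      simp [symPairMat, h₁, h₂, h₂']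

end symPairMat

namespace SignedGraph

variable {G : SignedGraph}

theorem sgn_mul_self (e : G.E) : G.sgn e * G.sgn e = 1 := by
  unfold sgn; split_ifs <;> norm_num

theorem sgn_ne_zero (e : G.E) : G.sgn e ≠ 0 :=
  left_ne_zero_of_mul_eq_one (sgn_mul_self e)

theorem abs_sgn_mul (e : G.E) (x : ℝ) : |G.sgn e * x| = |x| := by
  unfold sgn; split_ifs <;> simp

theorem cos_sgn_mul (e : G.E) (x : ℝ) : cos (G.sgn e * x) = cos x := by
  unfold sgn; split_ifs <;> simp

theorem sin_sgn_mul (e : G.E) (x : ℝ) : sin (G.sgn e * x) = G.sgn e * sin x := by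
  unfold sgn; split_ifs <;> simp

open Classical in
theorem arccos_sgn_mul (e : G.E) (x : ℝ) :
    arccos (G.sgn e * x) = if G.odd e then π - arccos x else arccos x := by
  unfold sgn; split_ifs <;> simp [arccos_neg]

theorem sgn_mul_le_sgn_mul {e : G.E} {x y : ℝ}
    (h : (G.odd e → x ≤ y) ∧ (¬ G.odd e → y ≤ x)) : G.sgn e * y ≤ G.sgn e * x := by
  unfold sgn; split_ifs with he
  · linarith [h.1 he]
  · linarith [h.2 he]

theorem nonpos_of_sgn_mul_neg {e : G.E} {x : ℝ} (h : G.sgn e * x < 0) (he : ¬ G.odd e) :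
    x ≤ 0 := by
  simp only [sgn, if_neg he, one_mul] at h
  exact h.le

theorem nonneg_of_sgn_mul_neg {e : G.E} {x : ℝ} (h : G.sgn e * x < 0) (he : G.odd e) :
    0 ≤ x := by
  simp only [sgn, if_pos he, neg_one_mul, neg_lt_zero] at h
  exact h.le

theorem NondegWeights.sgn_mul_ne_one {c : G.E → ℝ} (hnd : G.NondegWeights c) (e : G.E) :
    G.sgn e * c e ≠ 1 := by
  unfold sgn; split_ifs with he
  · intro h; exact (hnd e).1 he (by linarith)
  · simpa using (hnd e).2 he

variable (G) in
noncomputable def outerEdgeWeight (q : G.V → ℝ) (e : G.E) : ℝ :=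
  2 * Sym2.lift ⟨fun u v => q u * q v, fun _ _ => mul_comm _ _⟩ (G.ends e)

theorem outerEdgeWeight_of_ends (q : G.V → ℝ) {e : G.E} {u v : G.V} (h : G.ends e = s(u, v)) :
    G.outerEdgeWeight q e = 2 * (q u * q v) := by
  simp [outerEdgeWeight, h]

theorem dualMat_sq_outerEdgeWeight (hloop : ∀ e, ¬ (G.ends e).IsDiag)
    (hcomplete : ∀ u v, u ≠ v → ∃! e, G.ends e = s(u, v)) (q : G.V → ℝ) :
    DualMat G (fun u => q u ^ 2) (G.outerEdgeWeight q) = vecMulVec q q := by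
  ext u v
  simp only [DualMat, Matrix.add_apply, diagonal_apply, Matrix.sum_apply, Matrix.smul_apply,
    smul_eq_mul, vecMulVec_apply]
  by_cases huv : u = v
  · subst huv
    simp [symPairMat_apply_self (hloop _), sq]
  · obtain ⟨e, he, huniq⟩ := hcomplete u v huv
    rw [if_neg huv, zero_add, Finset.sum_eq_single e, symPairMat_apply_of_ne _ huv, if_pos he,
      outerEdgeWeight_of_ends q he]
    · ring
    · intro f _ hfe
      rw [symPairMat_apply_of_ne _ huv, if_neg (fun h => hfe (huniq f h)), mul_zero]
    · simp

end SignedGraph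

namespace GCycle

variable {G : SignedGraph} (C : GCycle G) (c : G.E → ℝ)

open Classical in
theorem oddCount_eq_card_filter :
    C.oddCount = (Finset.univ.filter fun i => G.odd (C.edge i)).card := by
  rw [oddCount, Nat.card_eq_fintype_card, Fintype.card_subtype]

theorem prod_sgn : ∏ i, G.sgn (C.edge i) = (-1) ^ C.oddCount := by
  classical
  simp only [SignedGraph.sgn]
  rw [Finset.prod_ite, Finset.prod_const, Finset.prod_const_one, mul_one,
    oddCount_eq_card_filter]

theorem sum_arccos_sgn_mul :
    ∑ i, arccos (G.sgn (C.edge i) * c (C.edge i)) = π * C.val (G.metric c) := by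
  classical
  rw [val, Finset.mul_sum]
  refine Finset.sum_congr rfl fun i _ => ?_
  rw [SignedGraph.arccos_sgn_mul, SignedGraph.metric]
  split_ifs <;> field_simp

theorem sum_sgn_mul_arccos :
    ∑ i, G.sgn (C.edge i) * arccos (c (C.edge i)) = π * (C.val (G.metric c) - C.oddCount) := by
  classical
  rw [mul_sub, ← sum_arccos_sgn_mul, oddCount_eq_card_filter, Finset.card_filter, Nat.cast_sum,
    Finset.mul_sum, ← Finset.sum_sub_distrib]
  refine Finset.sum_congr rfl fun i _ => ?_
  rw [SignedGraph.arccos_sgn_mul, SignedGraph.sgn]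
  split_ifs <;> simp

end GCycle

namespace IsTight

variable {G : SignedGraph} {c : G.E → ℝ} {C : GCycle G}

theorem prod_sgn (hC : IsTight G c C) : ∏ i, G.sgn (C.edge i) = -1 := by
  rw [C.prod_sgn, hC.1.neg_one_pow]

theorem sum_arccos_sgn_mul (hC : IsTight G c C) :
    ∑ i, arccos (G.sgn (C.edge i) * c (C.edge i)) = π := by
  rw [C.sum_arccos_sgn_mul, hC.2, mul_one]

theorem exists_sum_sgn_mul_arccos (hC : IsTight G c C) :
    ∃ k : ℤ, ∑ i, G.sgn (C.edge i) * arccos (c (C.edge i)) = k * (2 * π) := by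
  obtain ⟨m, hm⟩ := hC.1
  refine ⟨-m, ?_⟩
  rw [C.sum_sgn_mul_arccos, hC.2, hm]
  push_cast
  ring

end IsTight

structure IsTriangle (G : SignedGraph) (v : Fin 3 ≃ G.V) (e : Fin 3 → G.E) : Prop where
  surjective : Function.Surjective e
  ends_eq : ∀ i, G.ends (e i) = s(v i, v (i + 1))

namespace IsTriangle

variable {G : SignedGraph} {v : Fin 3 ≃ G.V} {e : Fin 3 → G.E}

theorem not_isDiag (hT : IsTriangle G v e) (f : G.E) : ¬ (G.ends f).IsDiag := by
  obtain ⟨i, rfl⟩ := hT.surjective f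
  rw [hT.ends_eq, Sym2.mk_isDiag_iff, v.apply_eq_iff_eq]
  fin_cases i <;> decide

theorem existsUnique_ends (hT : IsTriangle G v e) {a b : G.V} (hab : a ≠ b) :
    ∃! f, G.ends f = s(a, b) := by
  have hpair : ∀ i j : Fin 3, i ≠ j → ∃ k, s(i, j) = s(k, k + 1) := by decide
  have hinj : ∀ k l : Fin 3, s(k, k + 1) = s(l, l + 1) → k = l := by decide
  have hends : ∀ k, G.ends (e k) = (s(k, k + 1)).map v := hT.ends_eq
  obtain ⟨k, hk⟩ := hpair (v.symm a) (v.symm b) (by simpa using hab)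
  have hab' : s(a, b) = (s(k, k + 1)).map v := by
    rw [← hk, Sym2.map_mk, v.apply_symm_apply, v.apply_symm_apply]
  refine ⟨e k, (hends k).trans hab'.symm, fun f hf => ?_⟩
  obtain ⟨l, rfl⟩ := hT.surjective f
  rw [hends, hab'] at hf
  rw [hinj l k (Sym2.map.injective v.injective hf)]

theorem apply_eq_of_ends (hT : IsTriangle G v e) {X : Matrix G.V G.V ℝ} (hX : X.IsSymm)
    {c : G.E → ℝ} (hXc : ∀ i, X (v i) (v (i + 1)) = c (e i)) {f : G.E} {a b : G.V}
    (hf : G.ends f = s(a, b)) : X a b = c f := by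
  obtain ⟨i, rfl⟩ := hT.surjective f
  rw [hT.ends_eq, Sym2.eq_iff] at hf
  rcases hf with ⟨rfl, rfl⟩ | ⟨rfl, rfl⟩
  · exact hXc i
  · rw [hX.apply, hXc i]

theorem circleGram_apply_of_ends (hT : IsTriangle G v e) {c : G.E → ℝ} {α : Fin 3 → ℝ}
    (hα : ∀ i, cos (α i - α (i + 1)) = c (e i)) {f : G.E} {a b : G.V}
    (hf : G.ends f = s(a, b)) : circleGram (α ∘ v.symm) a b = c f :=
  hT.apply_eq_of_ends (isSymm_circleGram _) (fun i => by simpa [circleGram] using hα i) hf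

theorem isFeasible_circleGram (hT : IsTriangle G v e) {c : G.E → ℝ} {α : Fin 3 → ℝ}
    (hα : ∀ i, cos (α i - α (i + 1)) = c (e i)) :
    IsFeasible G c (circleGram (α ∘ v.symm)) := by
  refine ⟨posSemidef_circleGram _, fun a => by simp [circleGram], fun f _ a b hf => ?_⟩
  have hab := hT.circleGram_apply_of_ends hα hf
  exact ⟨fun _ => hab.le, fun _ => hab.ge⟩

end IsTriangle

structure IsTightOddTriangle (G : SignedGraph) (c : G.E → ℝ) (v : Fin 3 ≃ G.V)
    (e : Fin 3 → G.E) : Prop extends IsTriangle G v e where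
  abs_lt_one : ∀ i, |c (e i)| < 1
  prod_sgn : ∏ i, G.sgn (e i) = -1
  sum_arccos_sgn_mul : ∑ i, arccos (G.sgn (e i) * c (e i)) = π
  exists_sum_sgn_mul_arccos : ∃ k : ℤ, ∑ i, G.sgn (e i) * arccos (c (e i)) = k * (2 * π)

theorem IsTight.exists_isTightOddTriangle {G : SignedGraph} {c : G.E → ℝ} {C : GCycle G}
    (hC : IsTight G c C) (hc : ∀ e, c e ∈ Set.Icc (-1 : ℝ) 1) (hnd : G.NondegWeights c)
    (hV : Fintype.card G.V = 3) (hE : Fintype.card G.E = 3) (hlen : C.len = 3) :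
    ∃ (v : Fin 3 ≃ G.V) (e : Fin 3 → G.E), IsTightOddTriangle G c v e := by
  obtain ⟨k, vtx, edge, vinj, einj, incid⟩ := C
  obtain rfl : k = 2 := Nat.succ_injective hlen
  have hlt : ∀ i, G.sgn (edge i) * c (edge i) < 1 := fun i =>
    lt_of_le_of_ne ((le_abs_self _).trans ((G.abs_sgn_mul _ _).trans_le (abs_le.2 (hc _))))
      (hnd.sgn_mul_ne_one _)
  have hsum := hC.sum_arccos_sgn_mul
  refine ⟨Equiv.ofBijective vtx ((Fintype.bijective_iff_injective_and_card vtx).2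
      ⟨vinj, by simp [hV]⟩), edge,
    ⟨⟨((Fintype.bijective_iff_injective_and_card edge).2 ⟨einj, by simp [hE]⟩).surjective,
      incid⟩, fun i => ?_, hC.prod_sgn, hsum, hC.exists_sum_sgn_mul_arccos⟩⟩
  rw [← G.abs_sgn_mul (edge i)]
  exact abs_lt.2 ⟨Real.neg_one_lt_of_sum_arccos_eq_pi hlt hsum i, hlt i⟩

namespace IsTightOddTriangle

variable {G : SignedGraph} {c : G.E → ℝ} {v : Fin 3 ≃ G.V} {e : Fin 3 → G.E}

theorem apply_eq_of_isFeasible (hT : IsTightOddTriangle G c v e) {X : Matrix G.V G.V ℝ}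
    (hX : IsFeasible G c X) (i : Fin 3) : X (v i) (v (i + 1)) = c (e i) := by
  obtain ⟨hpsd, hdiag, hedge⟩ := hX
  have hresigned : (fun i => G.sgn (e i) * X (v i) (v (i + 1))) =
      fun i => G.sgn (e i) * c (e i) := by
    refine Real.eq_of_le_of_sum_arccos_eq_pi (fun i => ?_) (fun i => ?_) (fun i => ?_)
      hT.sum_arccos_sgn_mul ?_
    · exact (abs_lt.1 ((G.abs_sgn_mul _ _).trans_lt (hT.abs_lt_one i))).1.le
    · exact G.sgn_mul_le_sgn_mul (hedge (e i) trivial _ _ (hT.ends_eq i))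
    · exact (le_abs_self _).trans ((G.abs_sgn_mul _ _).trans_le (hpsd.abs_apply_le_one hdiag _ _))
    · have hdet := hpsd.det_nonneg
      rw [det_eq_of_isSymm_of_diag v (isHermitian_iff_isSymm.1 hpsd.isHermitian) hdiag] at hdet
      have hprod := hT.prod_sgn
      rw [Fin.prod_univ_three] at hprod
      simp only [Fin.reduceAdd]
      linear_combination hdet + 2 * (X (v 0) (v 1) * X (v 1) (v 2) * X (v 2) (v 0)) * hprod
        + X (v 0) (v 1) ^ 2 * G.sgn_mul_self (e 0) + X (v 1) (v 2) ^ 2 * G.sgn_mul_self (e 1)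
        + X (v 2) (v 0) ^ 2 * G.sgn_mul_self (e 2)
  exact mul_left_cancel₀ (G.sgn_ne_zero (e i)) (congrFun hresigned i)

theorem eq_of_isFeasible (hT : IsTightOddTriangle G c v e) {X Y : Matrix G.V G.V ℝ}
    (hX : IsFeasible G c X) (hY : IsFeasible G c Y) : X = Y :=
  ext_of_isSymm_of_cyclic v (isHermitian_iff_isSymm.1 hX.1.isHermitian)
    (isHermitian_iff_isSymm.1 hY.1.isHermitian) (fun a => (hX.2.1 a).trans (hY.2.1 a).symm)
    (fun i => (hT.apply_eq_of_isFeasible hX i).trans (hT.apply_eq_of_isFeasible hY i).symm)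

theorem exists_angles (hT : IsTightOddTriangle G c v e) :
    ∃ α : Fin 3 → ℝ, ∀ i, cos (α i - α (i + 1)) = c (e i) ∧
      sin (α i - α (i + 1)) = G.sgn (e i) * sin (arccos (c (e i))) := by
  obtain ⟨k, hk⟩ := hT.exists_sum_sgn_mul_arccos
  obtain ⟨α, hα⟩ := Real.exists_fin_three_sub_eq_of_sum_eq_int_mul_two_pi hk
  refine ⟨α, fun i => ⟨?_, ?_⟩⟩
  · obtain ⟨h₁, h₂⟩ := abs_lt.1 (hT.abs_lt_one i)
    rw [(hα i).1, G.cos_sgn_mul, cos_arccos h₁.le h₂.le]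
  · rw [(hα i).2, G.sin_sgn_mul]

theorem existsUnique_isFeasible (hT : IsTightOddTriangle G c v e) : ∃! X, IsFeasible G c X := by
  obtain ⟨α, hα⟩ := hT.exists_angles
  have hX := hT.isFeasible_circleGram (fun i => (hα i).1)
  exact ⟨_, hX, fun Y hY => hT.eq_of_isFeasible hY hX⟩

theorem rank_eq_two_of_isFeasible (hT : IsTightOddTriangle G c v e) {X : Matrix G.V G.V ℝ}
    (hX : IsFeasible G c X) : X.rank = 2 := by
  obtain ⟨α, hα⟩ := hT.exists_angles
  have hcos : cos (α 0 - α 1) = c (e 0) := (hα 0).1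
  rw [hT.eq_of_isFeasible hX (hT.isFeasible_circleGram (fun i => (hα i).1))]
  exact rank_circleGram_eq_two (i := v 0) (j := v 1) (by simpa [hcos] using hT.abs_lt_one 0)

theorem sin_arccos_pos (hT : IsTightOddTriangle G c v e) (i : Fin 3) :
    0 < sin (arccos (c (e i))) := by
  obtain ⟨h₁, h₂⟩ := abs_lt.1 (hT.abs_lt_one i)
  exact sin_pos_of_pos_of_lt_pi (arccos_pos.2 h₂) (arccos_lt_pi.2 h₁)

theorem sgn_mul_outerEdgeWeight_neg (hT : IsTightOddTriangle G c v e) {α : Fin 3 → ℝ}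
    (hα : ∀ i, sin (α i - α (i + 1)) = G.sgn (e i) * sin (arccos (c (e i)))) (i : Fin 3) :
    G.sgn (e i) * G.outerEdgeWeight (fun u => sin (α (v.symm u + 1) - α (v.symm u + 2))) (e i)
      < 0 := by
  have hprod := hT.prod_sgn
  rw [Fin.prod_univ_three] at hprod
  have h₀ : sin (α 0 - α 1) = G.sgn (e 0) * sin (arccos (c (e 0))) := hα 0
  have h₁ : sin (α 1 - α 2) = G.sgn (e 1) * sin (arccos (c (e 1))) := hα 1
  have h₂ : sin (α 2 - α 0) = G.sgn (e 2) * sin (arccos (c (e 2))) := hα 2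
  have := mul_pos (hT.sin_arccos_pos 0) (hT.sin_arccos_pos 1)
  have := mul_pos (hT.sin_arccos_pos 1) (hT.sin_arccos_pos 2)
  have := mul_pos (hT.sin_arccos_pos 2) (hT.sin_arccos_pos 0)
  rw [G.outerEdgeWeight_of_ends _ (hT.ends_eq i)]
  -- the left side is `2 σ(e₀) σ(e₁) σ(e₂)` times two of the positive sines
  fin_cases i <;>
    simp only [Fin.zero_eta, Fin.mk_one, Fin.reduceFinMk, Fin.isValue, Equiv.symm_apply_apply,
      zero_add, Fin.reduceAdd, h₀, h₁, h₂] <;>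
    nlinarith

theorem exists_isNiceDual (hT : IsTightOddTriangle G c v e) :
    ∃ (ωV : G.V → ℝ) (ωE : G.E → ℝ), IsNiceDual G c ωV ωE ∧ ∀ f, ωE f ≠ 0 := by
  obtain ⟨α, hα⟩ := hT.exists_angles
  set q : G.V → ℝ := fun u => sin (α (v.symm u + 1) - α (v.symm u + 2))
  have hX := hT.isFeasible_circleGram (fun i => (hα i).1)
  have hΩ : DualMat G (fun u => q u ^ 2) (G.outerEdgeWeight q) = vecMulVec q q :=
    SignedGraph.dualMat_sq_outerEdgeWeight hT.not_isDiag (fun _ _ => hT.existsUnique_ends) q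
  have hneg : ∀ f, G.sgn f * G.outerEdgeWeight q f < 0 := by
    intro f
    obtain ⟨i, rfl⟩ := hT.surjective f
    exact hT.sgn_mul_outerEdgeWeight_neg (fun i => (hα i).2) i
  have hq : q ≠ 0 := fun h => by
    have h₀ := hneg (e 0)
    rw [SignedGraph.outerEdgeWeight_of_ends q (hT.ends_eq 0), h] at h₀
    simp at h₀
  have hdual : IsDualSol G (fun u => q u ^ 2) (G.outerEdgeWeight q) :=
    ⟨fun f hf => SignedGraph.nonpos_of_sgn_mul_neg (hneg f) hf,
      fun f hf => SignedGraph.nonneg_of_sgn_mul_neg (hneg f) hf,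
      hΩ ▸ posSemidef_vecMulVec_self_star q⟩
  have hcomp : StrictComp G c (circleGram (α ∘ v.symm)) (fun u => q u ^ 2)
      (G.outerEdgeWeight q) := by
    refine ⟨?_, fun f _ a b hf => ?_, ?_⟩
    · rw [hΩ, mul_vecMulVec, circleGram_mulVec_sin_sub, zero_vecMulVec, trace_zero]
    · rw [hT.circleGram_apply_of_ends (fun i => (hα i).1) hf, sub_self, zero_mul]
    · rw [hΩ, rank_vecMulVec_self hq, ← Fintype.card_congr v, Fintype.card_fin,
        hT.rank_eq_two_of_isFeasible hX]
  exact ⟨_, _, ⟨hdual, _, ⟨hX, fun Y hY => by rw [hT.eq_of_isFeasible hY hX]⟩, hcomp⟩,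
    fun f h => by simpa [h] using hneg f⟩

end IsTightOddTriangle

theorem stmt4_tight_triangle_general
    (G : SignedGraph) (c : G.E → ℝ) (hc : ∀ e, c e ∈ Set.Icc (-1 : ℝ) 1)
    (hnd : G.NondegWeights c)
    (hV : Fintype.card G.V = 3) (hE : Fintype.card G.E = 3)
    (C : GCycle G) (hlen : C.len = 3) (htight : IsTight G c C) :
    (∃! X, IsFeasible G c X) ∧ (∀ X, IsFeasible G c X → X.rank = 2) ∧
    ∃ (ωV : G.V → ℝ) (ωE : G.E → ℝ), IsNiceDual G c ωV ωE ∧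
      (∀ e, ¬ StrictlyTight G c e → ωE e = 0) ∧ (∀ e, ωE e ≠ 0) := by
  have hedge : Function.Surjective C.edge :=
    ((Fintype.bijective_iff_injective_and_card _).2
      ⟨C.edge_inj, by simp [hE, ← hlen, GCycle.len]⟩).surjective
  obtain ⟨v, e, hT⟩ := htight.exists_isTightOddTriangle hc hnd hV hE hlen
  obtain ⟨ωV, ωE, hnice, hne⟩ := hT.exists_isNiceDual
  exact ⟨hT.existsUnique_isFeasible, fun X hX => hT.rank_eq_two_of_isFeasible hX, ωV, ωE, hnice,
    fun f hf => (hf ⟨C, htight, hlen.ge, hedge f⟩).elim, hne⟩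

/-- Lemma 4.1. If `G` is isomorphic to `K₃`, `c` is nondegenerate
and the triangle is an odd tight cycle, then `P(G,Σ,c)` has a unique solution of
rank exactly two, and there is a nice dual solution supported on strictly tight
edges which is nonzero on every edge. -/
theorem stmt4_tight_triangle
    (G : SignedGraph) (c : G.E → ℝ) (hc : ∀ e, c e ∈ Set.Icc (-1 : ℝ) 1)
    (hnd : G.NondegWeights c)
    (hV : Fintype.card G.V = 3) (hE : Fintype.card G.E = 3)
    (hloopless : ∀ e, ¬ (G.ends e).IsDiag) (hinj : Function.Injective G.ends)
    (C : GCycle G) (hlen : C.len = 3) (htight : IsTight G c C) :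
    (∃! X, IsFeasible G c X) ∧ (∀ X, IsFeasible G c X → X.rank = 2) ∧
    ∃ (ωV : G.V → ℝ) (ωE : G.E → ℝ), IsNiceDual G c ωV ωE ∧
      (∀ e, ¬ StrictlyTight G c e → ωE e = 0) ∧ (∀ e, ωE e ≠ 0) :=
  stmt4_tight_triangle_general G c hc hnd hV hE C hlen htight
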